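/- arXiv:1411.0944 — 2 statements merged into one kernel-verified Lean document; each statement's English description precedes it below -/
import Mathlib

section
/- For 𝒫 = (Bz^r, PGI^r) and all n ≥ 2, the cost of local monotonicity on the class 𝔚^c of constant-sum weighted games satisfies c_𝒫(n,𝔚^c) ≥ max(0, (n−5)/(n−1)). -/
open scoped Classical

/-- A simple game on the player set `{1,…,n}` (modeled as `Fin n`):
a monotone map from coalitions to `{0,1}` (modeled as `Bool`) that is
`0` on the empty coalition and `1` on the grand coalition. -/
structure SimpleGame (n : ℕ) where
  win : Finset (Fin n) → Bool
  win_empty : win ∅ = false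
  win_univ : win Finset.univ = true
  win_mono : ∀ ⦃S T : Finset (Fin n)⦄, S ⊆ T → win S = true → win T = true

namespace SimpleGame

variable {n : ℕ}

/-- Player `i` dominates player `j`: `v((S ∪ {i}) \ {j}) ≥ v(S)` for every
coalition `S` with `j ∈ S` and `i ∉ S`. -/
def Dominates (v : SimpleGame n) (i j : Fin n) : Prop :=
  ∀ S : Finset (Fin n), j ∈ S → i ∉ S → v.win S ≤ v.win ((S ∪ {i}) \ {j})

/-- The game is complete if the dominance relation is a total preorder. -/
def IsComplete (v : SimpleGame n) : Prop :=
  (∀ i, v.Dominates i i) ∧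
  (∀ i j, v.Dominates i j ∨ v.Dominates j i) ∧
  (∀ i j k, v.Dominates i j → v.Dominates j k → v.Dominates i k)

/-- `S` is a minimal winning coalition: winning and every proper subset is losing. -/
def IsMWC (v : SimpleGame n) (S : Finset (Fin n)) : Prop :=
  v.win S = true ∧ ∀ T ⊂ S, v.win T = false

/-- `M_i`: the set of minimal winning coalitions containing player `i`. -/
noncomputable def Mset (v : SimpleGame n) (i : Fin n) : Finset (Finset (Fin n)) :=
  Finset.univ.filter fun S => v.IsMWC S ∧ i ∈ S

/-- `M_i(l)`: minimal winning coalitions of cardinality `l` containing `i`. -/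
noncomputable def Mlset (v : SimpleGame n) (i : Fin n) (l : ℕ) : Finset (Finset (Fin n)) :=
  (v.Mset i).filter fun S => S.card = l

/-- Raw Public Good index: `PGI^r_i(v) = |M_i|`. -/
noncomputable def PGI (v : SimpleGame n) (i : Fin n) : ℕ := (v.Mset i).card

/-- Raw Deegan-Packel index: `DP^r_i(v) = Σ_{S ∈ M_i} 1/|S|`. -/
noncomputable def DP (v : SimpleGame n) (i : Fin n) : ℝ :=
  ∑ S ∈ v.Mset i, (1 : ℝ) / (S.card : ℝ)

/-- The game is uniform if all minimal winning coalitions have the same cardinality. -/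
def IsUniform (v : SimpleGame n) : Prop :=
  ∀ S T, v.IsMWC S → v.IsMWC T → S.card = T.card

/-- `[q; w]` is a weighted representation of `v`. -/
def IsWeightedRep (v : SimpleGame n) (q : ℝ) (w : Fin n → ℝ) : Prop :=
  0 < q ∧ (∀ i, 0 ≤ w i) ∧ ∀ S : Finset (Fin n), v.win S = true ↔ q ≤ ∑ i ∈ S, w i

/-- The game is weighted. -/
def IsWeighted (v : SimpleGame n) : Prop := ∃ q w, v.IsWeightedRep q w

/-- `D_i`: coalitions decisive for player `i`. -/
noncomputable def Dset (v : SimpleGame n) (i : Fin n) : Finset (Finset (Fin n)) :=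
  Finset.univ.filter fun S => i ∈ S ∧ v.win S = true ∧ v.win (S.erase i) = false

/-- Raw Banzhaf index: `Bz^r_i(v) = |D_i|`. -/
noncomputable def Bz (v : SimpleGame n) (i : Fin n) : ℕ := (v.Dset i).card

/-- `S` is a shift-minimal winning coalition. -/
def IsSMWC (v : SimpleGame n) (S : Finset (Fin n)) : Prop :=
  v.IsMWC S ∧ ∀ i ∈ S, ∀ j ∉ S, v.Dominates i j → ¬ v.Dominates j i →
    v.win ((S \ {i}) ∪ {j}) = false

/-- `𝒮_i`: the set of shift-minimal winning coalitions containing player `i`. -/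
noncomputable def Sset (v : SimpleGame n) (i : Fin n) : Finset (Finset (Fin n)) :=
  Finset.univ.filter fun S => v.IsSMWC S ∧ i ∈ S

/-- Raw Shift index: `S^r_i(v) = |𝒮_i|`. -/
noncomputable def ShiftIdx (v : SimpleGame n) (i : Fin n) : ℕ := (v.Sset i).card

/-- The number of players for which the coalition `S` is decisive. -/
noncomputable def numDecisive (v : SimpleGame n) (S : Finset (Fin n)) : ℕ :=
  (Finset.univ.filter fun k => k ∈ S ∧ v.win S = true ∧ v.win (S.erase k) = false).card

/-- Raw Johnston index: `Jo^r_i(v) = Σ_{S ∈ D_i} 1/#{decisive players of S}`. -/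
noncomputable def Jo (v : SimpleGame n) (i : Fin n) : ℝ :=
  ∑ S ∈ v.Dset i, (1 : ℝ) / (v.numDecisive S : ℝ)

/-- `i` is a null player: it belongs to no minimal winning coalition. -/
def IsNull (v : SimpleGame n) (i : Fin n) : Prop := ∀ S, v.IsMWC S → i ∉ S

end SimpleGame

/-- A power index: assigns to every `n`-player simple game a vector in `ℝ^n`. -/
abbrev PowerIndex : Type := ∀ n : ℕ, SimpleGame n → Fin n → ℝ

/-- A class of games (one set of games for every number of players). -/
abbrev GameClass : Type := ∀ n : ℕ, Set (SimpleGame n)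

/-- Convex combination `P^α = Σ_h α_h P^h` of power indices. -/
noncomputable def convexComb {r : ℕ} (α : Fin r → ℝ) (P : Fin r → PowerIndex) : PowerIndex :=
  fun n v i => ∑ h, α h * P h n v i

/-- `Q` satisfies local monotonicity on the `n`-player games of `𝔊`. -/
def LMon (𝔊 : GameClass) (n : ℕ) (Q : PowerIndex) : Prop :=
  ∀ v ∈ 𝔊 n, ∀ i j : Fin n, v.Dominates i j → Q n v j ≤ Q n v i

/-- The cost of local monotonicity `c_𝒫(n,𝔊)`. -/
noncomputable def costLM {r : ℕ} [NeZero r] (P : Fin r → PowerIndex) (n : ℕ)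
    (𝔊 : GameClass) : ℝ :=
  sInf {β : ℝ | β ∈ Set.Icc (0 : ℝ) 1 ∧
    ∀ α ∈ stdSimplex ℝ (Fin r), β ≤ α 0 → LMon 𝔊 n (convexComb α P)}

/-- The raw Banzhaf index as a power index. -/
noncomputable def BzPI : PowerIndex := fun _ v i => (v.Bz i : ℝ)

/-- The raw Public Good index as a power index. -/
noncomputable def PGIPI : PowerIndex := fun _ v i => (v.PGI i : ℝ)

/-- The raw Shift index as a power index. -/
noncomputable def ShiftPI : PowerIndex := fun _ v i => (v.ShiftIdx i : ℝ)

/-- The raw Johnston index as a power index. -/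
noncomputable def JoPI : PowerIndex := fun _ v i => v.Jo i

/-- The raw Deegan-Packel index as a power index. -/
noncomputable def DPPI : PowerIndex := fun _ v i => v.DP i

/-- `𝔚`: the class of weighted games. -/
def WeightedClass : GameClass := fun _ => {v | v.IsWeighted}

/-- `𝔚^c`: the class of constant-sum weighted games (exactly one of `S`, `N \ S`
is winning). -/
def ConstantSumWeightedClass : GameClass := fun n =>
  {v | v.IsWeighted ∧
    ∀ S : Finset (Fin n), v.win S = true ↔ v.win (Finset.univ \ S) = false}

/-!
For `n < 6` the bound is `0`, and every `β` in the defining set is nonnegative. The set is nonempty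
because `Bz^r` alone is locally monotone: swapping a dominated player `j` for `i` injects the
coalitions decisive for `j` into those decisive for `i`.

For `n = m + 6`, take the constant-sum weighted game `[m + 5; m + 3, 2, 1, …, 1]`. Its minimal
winning coalitions are exactly the coalitions of weight `m + 5`. The player of weight `2`
dominates any player of weight `1`. Yet counting coalitions by size gives `Bz^r = 2m + 10` and
`PGI^r = m + 5` for the former, and `Bz^r = PGI^r = 2m + 6` for the latter. So local monotonicity
of `α₁ Bz^r + (1 - α₁) PGI^r` forces `α₁ (m + 5) ≥ m + 1`, i.e. `α₁ ≥ (n - 5) / (n - 1)`.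
-/

open Finset

namespace SimpleGame

variable {n : ℕ} {v : SimpleGame n}

lemma dominates_iff {i j : Fin n} : v.Dominates i j ↔
    ∀ S, j ∈ S → i ∉ S → v.win S = true → v.win (insert i (S.erase j)) = true := by
  refine forall_congr' fun S => imp_congr_right fun hj => imp_congr_right fun hi => ?_
  have hswap : (S ∪ {i}) \ {j} = insert i (S.erase j) := by
    ext x
    simp only [mem_sdiff, mem_union, mem_singleton, mem_insert, mem_erase]
    grind
  rw [hswap, Bool.le_iff_imp]

theorem bz_le_bz_of_dominates {i j : Fin n} (h : v.Dominates i j) : v.Bz j ≤ v.Bz i := by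
  by_cases hij : i = j
  · rw [hij]
  let move : Finset (Fin n) → Finset (Fin n) := fun S => if i ∈ S then S else insert i (S.erase j)
  let back : Finset (Fin n) → Finset (Fin n) := fun T => if j ∈ T then T else insert j (T.erase i)
  refine card_le_card_of_injOn move (fun S hS => ?_) (Set.LeftInvOn.injOn (f₁' := back) ?_)
  · simp only [Dset, coe_filter, mem_univ, true_and, Set.mem_ofPred_eq] at hS ⊢
    obtain ⟨hj, hwin, hlose⟩ := hS
    by_cases hi : i ∈ S
    · simp only [move, if_pos hi]
      refine ⟨hi, hwin, ?_⟩
      by_contra hwin'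
      have := dominates_iff.1 h _ (mem_erase.2 ⟨Ne.symm hij, hj⟩) (notMem_erase i S)
        (by simpa using hwin')
      rw [erase_right_comm, insert_erase (mem_erase.2 ⟨hij, hi⟩)] at this
      simp [hlose] at this
    · simp only [move, if_neg hi]
      refine ⟨mem_insert_self _ _, dominates_iff.1 h S hj hi hwin, ?_⟩
      rwa [erase_insert (fun h => hi (mem_of_mem_erase h))]
  · intro S hS
    simp only [Dset, coe_filter, mem_univ, true_and, Set.mem_ofPred_eq] at hS
    by_cases hi : i ∈ S
    · simp [move, back, hi, hS.1]
    · simp [move, back, hi, hij, Ne.symm hij, insert_erase hS.1]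

lemma isMWC_iff_forall_erase {S : Finset (Fin n)} :
    v.IsMWC S ↔ v.win S = true ∧ ∀ i ∈ S, v.win (S.erase i) = false := by
  refine ⟨fun ⟨hS, hmin⟩ => ⟨hS, fun i hi => hmin _ (erase_ssubset hi)⟩,
    fun ⟨hS, hmin⟩ => ⟨hS, fun T hT => ?_⟩⟩
  obtain ⟨i, hiS, hiT⟩ := exists_of_ssubset hT
  by_contra hwin
  simpa [hmin i hiS] using v.win_mono (subset_erase.mpr ⟨hT.subset, hiT⟩) (by simpa using hwin)

lemma IsWeightedRep.dominates_of_le {q : ℝ} {w : Fin n → ℝ} (hv : v.IsWeightedRep q w)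
    {i j : Fin n} (hw : w j ≤ w i) : v.Dominates i j := by
  refine dominates_iff.2 fun S hj hi hS => (hv.2.2 _).2 ((hv.2.2 S).1 hS |>.trans ?_)
  rw [sum_insert (fun h => hi (mem_of_mem_erase h)), ← sum_erase_add S w hj]
  linarith

end SimpleGame

lemma lmon_convexComb_of_one_le {α : Fin 2 → ℝ} (hα : α ∈ stdSimplex ℝ (Fin 2)) (h1 : 1 ≤ α 0)
    (𝔊 : GameClass) (n : ℕ) : LMon 𝔊 n (convexComb α ![BzPI, PGIPI]) := by
  have hα1 : α 1 = 0 := by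
    have := hα.2
    rw [Fin.sum_univ_two] at this
    linarith [hα.1 1]
  intro v _ i j h
  simp only [convexComb, Fin.sum_univ_two, Matrix.cons_val_zero, Matrix.cons_val_one, BzPI, hα1,
    zero_mul, add_zero]
  exact mul_le_mul_of_nonneg_left (by exact_mod_cast v.bz_le_bz_of_dominates h) (hα.1 0)

namespace ThreeTypeGame

variable (m : ℕ)

def heavy : Fin (m + 6) := ⟨0, by omega⟩
def medium : Fin (m + 6) := ⟨1, by omega⟩
def light : Fin (m + 6) := ⟨2, by omega⟩

def weight (i : Fin (m + 6)) : ℕ :=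
  if i = heavy m then m + 3 else if i = medium m then 2 else 1

variable {m}

@[simp] lemma heavy_ne_medium : heavy m ≠ medium m := by simp [heavy, medium]
@[simp] lemma heavy_ne_light : heavy m ≠ light m := by simp [heavy, light]
@[simp] lemma medium_ne_light : medium m ≠ light m := by simp [medium, light]
@[simp] lemma medium_ne_heavy : medium m ≠ heavy m := heavy_ne_medium.symm
@[simp] lemma light_ne_heavy : light m ≠ heavy m := heavy_ne_light.symm
@[simp] lemma light_ne_medium : light m ≠ medium m := medium_ne_light.symm

lemma weight_heavy : weight m (heavy m) = m + 3 := if_pos rfl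
lemma weight_medium : weight m (medium m) = 2 := by simp [weight]
lemma weight_light : weight m (light m) = 1 := by simp [weight]
lemma weight_of_ne {i : Fin (m + 6)} (hh : i ≠ heavy m) (hm : i ≠ medium m) : weight m i = 1 := by
  simp [weight, hh, hm]

lemma one_le_weight (i : Fin (m + 6)) : 1 ≤ weight m i := by
  unfold weight
  split_ifs <;> omega

lemma sum_weight (S : Finset (Fin (m + 6))) :
    ∑ i ∈ S, weight m i =
      #S + (if heavy m ∈ S then m + 2 else 0) + (if medium m ∈ S then 1 else 0) := by
  have hw : ∀ i, weight m i =
      1 + (if heavy m = i then m + 2 else 0) + (if medium m = i then 1 else 0) := by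
    intro i
    rcases eq_or_ne i (heavy m) with rfl | hh
    · rw [weight_heavy, if_pos rfl, if_neg medium_ne_heavy]
      omega
    rcases eq_or_ne i (medium m) with rfl | hm
    · simp [weight_medium]
    · simp [weight_of_ne hh hm, hh.symm, hm.symm]
  simp only [hw, sum_add_distrib, sum_ite_eq, card_eq_sum_ones]

variable (m) in
def game : SimpleGame (m + 6) where
  win S := decide (m + 5 ≤ ∑ i ∈ S, weight m i)
  win_empty := by simp
  win_univ := by
    rw [decide_eq_true_eq, sum_weight, if_pos (mem_univ _), if_pos (mem_univ _), card_univ,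
      Fintype.card_fin]
    omega
  win_mono S T hST h := by
    simp only [decide_eq_true_eq] at h ⊢
    exact h.trans (sum_le_sum_of_subset hST)

variable (m) in
def weightLevel (i : Fin (m + 6)) (t : ℕ) : Finset (Finset (Fin (m + 6))) :=
  {S | i ∈ S ∧ ∑ j ∈ S, weight m j = t}

lemma win_iff {S : Finset (Fin (m + 6))} :
    (game m).win S = true ↔ m + 5 ≤ ∑ i ∈ S, weight m i := decide_eq_true_iff

lemma win_erase_iff {S : Finset (Fin (m + 6))} {i : Fin (m + 6)} (hi : i ∈ S) :
    (game m).win (S.erase i) = true ↔ m + 5 + weight m i ≤ ∑ j ∈ S, weight m j := by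
  rw [win_iff, ← sum_erase_add S _ hi]
  omega

lemma isWeightedRep : (game m).IsWeightedRep (m + 5) (fun i => weight m i) := by
  refine ⟨by positivity, fun i => by positivity, fun S => ?_⟩
  rw [win_iff, ← Nat.cast_sum]
  exact_mod_cast Iff.rfl

/-- The total weight `2m + 9` is odd and the quota `m + 5` is a strict majority of it. -/
lemma mem_constantSumWeightedClass : game m ∈ ConstantSumWeightedClass (m + 6) := by
  refine ⟨⟨_, _, isWeightedRep⟩, fun S => ?_⟩
  have htotal := sum_sdiff (f := weight m) (subset_univ S)
  rw [sum_weight univ, if_pos (mem_univ _), if_pos (mem_univ _), card_univ, Fintype.card_fin]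
    at htotal
  rw [← Bool.not_eq_true, win_iff, win_iff]
  omega

lemma dominates_medium_light : (game m).Dominates (medium m) (light m) :=
  isWeightedRep.dominates_of_le (by simp [weight_medium, weight_light])

lemma mem_Dset_iff {i : Fin (m + 6)} {S : Finset (Fin (m + 6))} :
    S ∈ (game m).Dset i ↔
      i ∈ S ∧ m + 5 ≤ ∑ j ∈ S, weight m j ∧ ∑ j ∈ S, weight m j < m + 5 + weight m i := by
  simp only [SimpleGame.Dset, mem_filter, mem_univ, true_and, ← Bool.not_eq_true]
  constructor
  · rintro ⟨hi, hwin, hlose⟩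
    exact ⟨hi, win_iff.1 hwin, not_le.1 (mt (win_erase_iff hi).2 hlose)⟩
  · rintro ⟨hi, hwin, hlose⟩
    exact ⟨hi, win_iff.2 hwin, mt (win_erase_iff hi).1 (not_le.2 hlose)⟩

/-- A minimal winning coalition containing a player of weight `1` cannot exceed the quota, and
the only other candidate is `{heavy, medium}`, of weight exactly `m + 5`. -/
lemma isMWC_iff {S : Finset (Fin (m + 6))} :
    (game m).IsMWC S ↔ ∑ j ∈ S, weight m j = m + 5 := by
  simp only [SimpleGame.isMWC_iff_forall_erase, ← Bool.not_eq_true]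
  constructor
  · rintro ⟨hwin, hmin⟩
    refine le_antisymm ?_ (win_iff.1 hwin)
    by_cases hS : S ⊆ {heavy m, medium m}
    · have := sum_le_sum_of_subset (f := weight m) hS
      rwa [sum_pair heavy_ne_medium, weight_heavy, weight_medium] at this
    · obtain ⟨x, hxS, hx⟩ := not_subset.1 hS
      simp only [mem_insert, mem_singleton, not_or] at hx
      have := mt (win_erase_iff hxS).2 (hmin x hxS)
      rw [weight_of_ne hx.1 hx.2] at this
      omega
  · intro hS
    refine ⟨win_iff.2 hS.ge, fun i hi => ?_⟩
    have := one_le_weight (m := m) i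
    rw [win_erase_iff hi]
    omega

lemma Mset_eq_weightLevel (i : Fin (m + 6)) : (game m).Mset i = weightLevel m i (m + 5) := by
  ext S
  simp [SimpleGame.Mset, weightLevel, isMWC_iff, and_comm]

lemma Dset_light_eq_weightLevel : (game m).Dset (light m) = weightLevel m (light m) (m + 5) := by
  ext S
  simp only [mem_Dset_iff, weightLevel, mem_filter, mem_univ, true_and, weight_light]
  exact and_congr_right fun _ => by omega

lemma Dset_medium_eq_weightLevel : (game m).Dset (medium m) =
    weightLevel m (medium m) (m + 5) ∪ weightLevel m (medium m) (m + 6) := by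
  ext S
  simp only [mem_Dset_iff, weightLevel, mem_union, mem_filter, mem_univ, true_and, weight_medium,
    ← and_or_left]
  exact and_congr_right fun _ => by omega

lemma card_weightLevel_medium {t : ℕ} (ht : m + 5 ≤ t) :
    #(weightLevel m (medium m) t) = (m + 4).choose (t - (m + 5)) + (m + 4).choose (t - 2) := by
  have hsplit : weightLevel m (medium m) t =
      {S ∈ powersetCard (t - (m + 3)) (univ : Finset (Fin (m + 6))) | {heavy m, medium m} ⊆ S} ∪
        {S ∈ powersetCard (t - 1) {heavy m}ᶜ | {medium m} ⊆ S} := by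
    ext S
    simp only [weightLevel, sum_weight, mem_union, mem_filter, mem_univ, true_and, mem_powersetCard,
      subset_univ, subset_compl_singleton, insert_subset_iff, singleton_subset_iff]
    by_cases hh : heavy m ∈ S <;> by_cases hm : medium m ∈ S <;> simp [hh, hm] <;> omega
  have hdisj : Disjoint
      {S ∈ powersetCard (t - (m + 3)) (univ : Finset (Fin (m + 6))) | {heavy m, medium m} ⊆ S}
      {S ∈ powersetCard (t - 1) {heavy m}ᶜ | {medium m} ⊆ S} := by
    simp +contextual [disjoint_left, insert_subset_iff, mem_powersetCard]
  rw [hsplit, card_union_of_disjoint hdisj,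
    card_filter_powersetCard_subset _ _ _ (subset_univ _) (by simp; omega),
    card_filter_powersetCard_subset _ _ _ (by simp) (by simp; omega)]
  simp only [card_univ, Fintype.card_fin, card_compl, card_singleton, card_pair heavy_ne_medium]
  congr 2

lemma card_weightLevel_light : #(weightLevel m (light m) (m + 5)) = 2 * m + 6 := by
  have hsplit : weightLevel m (light m) (m + 5) =
      {S ∈ powersetCard 3 {medium m}ᶜ | {heavy m, light m} ⊆ S} ∪
        {S ∈ powersetCard (m + 4) {heavy m}ᶜ | {medium m, light m} ⊆ S} := by
    ext S
    simp only [weightLevel, sum_weight, mem_union, mem_filter, mem_univ, true_and, mem_powersetCard,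
      subset_compl_singleton, insert_subset_iff, singleton_subset_iff]
    have hbig : heavy m ∈ S → medium m ∈ S → light m ∈ S → 3 ≤ #S := fun hh hm hl =>
      card_le_card (s := {heavy m, medium m, light m}) (by simp [insert_subset_iff, *]) |>.trans'
        (by rw [card_insert_of_notMem (by simp), card_pair (by simp)])
    have hsmall : heavy m ∉ S → medium m ∉ S → #S ≤ m + 4 := fun hh hm => by
      have := card_le_card
        (subset_compl_iff_disjoint_right.2 (by simp [hh, hm]) : S ⊆ {heavy m, medium m}ᶜ)
      rwa [card_compl, Fintype.card_fin, card_pair heavy_ne_medium] at this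
    by_cases hh : heavy m ∈ S <;> by_cases hm : medium m ∈ S <;> by_cases hl : light m ∈ S <;>
      simp [hh, hm, hl] at hbig hsmall ⊢ <;> omega
  have hdisj : Disjoint {S ∈ powersetCard 3 {medium m}ᶜ | {heavy m, light m} ⊆ S}
      {S ∈ powersetCard (m + 4) {heavy m}ᶜ | {medium m, light m} ⊆ S} := by
    simp +contextual [disjoint_left, insert_subset_iff, mem_powersetCard]
  rw [hsplit, card_union_of_disjoint hdisj,
    card_filter_powersetCard_subset _ _ _ (by simp) (by simp),
    card_filter_powersetCard_subset _ _ _ (by simp) (by simp)]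
  simp only [card_compl, card_singleton, card_pair heavy_ne_light, card_pair medium_ne_light,
    Fintype.card_fin, show m + 6 - 1 - 2 = m + 2 + 1 by omega, show m + 4 - 2 = m + 2 by omega,
    Nat.reduceSub, Nat.choose_one_right, Nat.choose_succ_self_right]
  ring

lemma bz_medium : (game m).Bz (medium m) = 2 * m + 10 := by
  rw [SimpleGame.Bz, Dset_medium_eq_weightLevel, card_union_of_disjoint,
    card_weightLevel_medium le_rfl, card_weightLevel_medium (by omega)]
  · simp only [tsub_self, Nat.choose_zero_right, Nat.reduceSubDiff, Nat.choose_succ_self_right,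
      add_tsub_cancel_left, Nat.choose_one_right, Nat.choose_self]
    ring
  · exact disjoint_filter.2 fun S _ h h' => by omega

lemma pgi_medium : (game m).PGI (medium m) = m + 5 := by
  rw [SimpleGame.PGI, Mset_eq_weightLevel, card_weightLevel_medium le_rfl]
  simp only [tsub_self, Nat.choose_zero_right, Nat.reduceSubDiff, Nat.choose_succ_self_right]
  ring

lemma bz_light : (game m).Bz (light m) = 2 * m + 6 := by
  rw [SimpleGame.Bz, Dset_light_eq_weightLevel, card_weightLevel_light]

lemma pgi_light : (game m).PGI (light m) = 2 * m + 6 := by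
  rw [SimpleGame.PGI, Mset_eq_weightLevel, card_weightLevel_light]

lemma add_one_le_mul_of_lmon {β : ℝ}
    (h : LMon ConstantSumWeightedClass (m + 6) (convexComb ![β, 1 - β] ![BzPI, PGIPI])) :
    (m + 1 : ℝ) ≤ β * (m + 5) := by
  have := h (game m) mem_constantSumWeightedClass _ _ dominates_medium_light
  simp only [convexComb, Fin.sum_univ_two, Matrix.cons_val_zero, Matrix.cons_val_one, BzPI, PGIPI,
    bz_medium, bz_light, pgi_medium, pgi_light] at this
  push_cast at this
  linarith

end ThreeTypeGame

/-- for `𝒫 = (Bz^r, PGI^r)` and `n ≥ 2`, the cost of local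
monotonicity on constant-sum weighted games is at least `max(0, (n-5)/(n-1))`. -/
theorem costLM_Bz_PGI_constant_sum_lower_bound (n : ℕ) (hn : 2 ≤ n) :
    max 0 (((n : ℝ) - 5) / ((n : ℝ) - 1)) ≤
      costLM ![BzPI, PGIPI] n ConstantSumWeightedClass := by
  refine le_csInf ⟨1, ⟨zero_le_one, le_rfl⟩, fun α hα h1 => lmon_convexComb_of_one_le hα h1 _ _⟩ ?_
  rintro β ⟨⟨hβ0, hβ1⟩, hLM⟩
  refine max_le hβ0 ?_
  rcases lt_or_ge n 6 with hn6 | hn6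
  · have hn5 : (n : ℝ) ≤ 5 := by exact_mod_cast Nat.lt_succ_iff.1 hn6
    have hn1 : (1 : ℝ) < n := by exact_mod_cast hn
    exact (div_nonpos_of_nonpos_of_nonneg (by linarith) (by linarith)).trans hβ0
  · obtain ⟨m, rfl⟩ := Nat.exists_eq_add_of_le' hn6
    have hsimplex : ![β, 1 - β] ∈ stdSimplex ℝ (Fin 2) :=
      ⟨Fin.forall_fin_two.2 ⟨hβ0, sub_nonneg.2 hβ1⟩, by simp⟩
    have := ThreeTypeGame.add_one_le_mul_of_lmon (hLM _ hsimplex le_rfl)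
    rw [div_le_iff₀ (by push_cast; linarith)]
    push_cast
    linarith
end

section
/- Let k ≥ 1 be an integer, m ∈ {0,1,2}, n = 3k+3+m, t = 2k²+3k+1, and let v be the weighted game on n players with quota 2t+m(k+1) and weights: one player of weight t+1+m(k+1) (player 1), one player of weight t+m(k+1) (player 2), k players of weight 2k+3, and 2k+1+m players of weight k+1. Then Bz^r_1(v) = 2^{n−2}+1, Bz^r_2(v) = 2^{n−2}−1, S^r_1(v) = 1 if k = 1 and S^r_1(v) = 2 if k > 1, and S^r_2(v) = −1 + S^r_1(v) + Σ_{a=0}^{k} C(k,a) · C(2k+1+m, ⌈(t − a(2k+3))/(k+1)⌉). -/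
/-!
Players `0` and `1` here are players 1 and 2 of the paper. Call the players `2, …, k+1` heavy
(weight `2k+3`) and the others light (weight `k+1`); all of them together weigh `q - 1`, so every
coalition `Y` of heavy and light players is losing. Since `2k+3` and `k+1` are coprime, the heavy
players form the only such `Y` of weight `t - 1`.

Split coalitions by their members among `0` and `1`. Player `0` is decisive for `Y ∪ {0}` iff
`w(Y) ≥ t - 1` and for `Y ∪ {0, 1}` iff `w(Y) ≤ t - 1`; player `1` is decisive for `Y ∪ {1}` iff
`w(Y) ≥ t` and for `Y ∪ {0, 1}` iff `w(Y) < t - 1`. This gives the Banzhaf indices `2^(n-2) ± 1`.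

A shift-minimal coalition containing `0` but not `1` has weight exactly `q` (else `1` could replace
`0`), so it is `0` together with the heavy players. The pair `{0, 1}` is shift-minimal iff `k ≥ 2`
(for `k = 1` the heavy player can replace `1`). A coalition `Y ∪ {1}` is shift-minimal iff
`t ≤ w(Y) < t + k + 1`; once `Y` has `a` heavy players this pins its number of light players to
`⌈(t - a(2k+3))/(k+1)⌉`.
-/

open scoped Classical

namespace Stmt18

variable {n : ℕ}

/-- A coalition `S` is winning in the weighted game `[q; w]` iff its total
weight reaches the quota. -/
def Win (q : ℕ) (w : Fin n → ℕ) (S : Finset (Fin n)) : Prop :=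
  q ≤ ∑ i ∈ S, w i

/-- `S` is a minimal winning coalition of `[q; w]`. -/
def IsMWC (q : ℕ) (w : Fin n → ℕ) (S : Finset (Fin n)) : Prop :=
  Win q w S ∧ ∀ T ⊂ S, ¬ Win q w T

/-- Player `i` dominates player `j` in `[q; w]`:
`v((S ∪ {i}) \ {j}) ≥ v(S)` whenever `j ∈ S` and `i ∉ S`. -/
def Dominates (q : ℕ) (w : Fin n → ℕ) (i j : Fin n) : Prop :=
  ∀ S : Finset (Fin n), j ∈ S → i ∉ S → Win q w S → Win q w ((S ∪ {i}) \ {j})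

/-- `S` is a shift-minimal winning coalition of `[q; w]`. -/
def IsSMWC (q : ℕ) (w : Fin n → ℕ) (S : Finset (Fin n)) : Prop :=
  IsMWC q w S ∧ ∀ i ∈ S, ∀ j ∉ S, Dominates q w i j → ¬ Dominates q w j i →
    ¬ Win q w ((S \ {i}) ∪ {j})

/-- Raw Banzhaf index of player `i` in `[q; w]`: the number of coalitions
decisive for `i`. -/
noncomputable def Bz (q : ℕ) (w : Fin n → ℕ) (i : Fin n) : ℕ :=
  (Finset.univ.filter fun S : Finset (Fin n) =>
    i ∈ S ∧ Win q w S ∧ ¬ Win q w (S.erase i)).card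

/-- Raw Shift index of player `i` in `[q; w]`: the number of shift-minimal
winning coalitions containing `i`. -/
noncomputable def ShiftIdx (q : ℕ) (w : Fin n → ℕ) (i : Fin n) : ℕ :=
  (Finset.univ.filter fun S : Finset (Fin n) => IsSMWC q w S ∧ i ∈ S).card

open Finset

section Counting

variable {α : Type*}

theorem card_filter_lt_add_card_filter_gt_add_card_filter_eq (s : Finset α) (f : α → ℕ) (a : ℕ) :
    #{x ∈ s | f x < a} + #{x ∈ s | a < f x} + #{x ∈ s | f x = a} = #s := by
  rw [← card_filter_add_card_filter_not (s := s) (fun x => f x < a),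
    ← card_filter_add_card_filter_not (s := {x ∈ s | ¬ f x < a}) (fun x => a < f x),
    filter_filter, filter_filter, add_assoc,
    filter_congr (p := fun x => ¬ f x < a ∧ a < f x) (q := fun x => a < f x) fun x _ => by omega,
    filter_congr (p := fun x => ¬ f x < a ∧ ¬ a < f x) (q := fun x => f x = a) fun x _ => by omega]

theorem card_filter_le_add_card_filter_ge (s : Finset α) (f : α → ℕ) (a : ℕ) :
    #{x ∈ s | f x ≤ a} + #{x ∈ s | a ≤ f x} = #s + #{x ∈ s | f x = a} := by
  rw [← card_union_add_card_inter, ← filter_or, ← filter_and,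
    filter_true_of_mem fun x _ => le_total _ _, filter_congr fun x _ => le_antisymm_iff.symm]

theorem card_filter_powerset_card_eq (s : Finset α) (p : ℕ → Prop) [DecidablePred p] {e : ℕ}
    (hp : ∀ x, p x ↔ x = e) : #{Z ∈ s.powerset | p #Z} = (#s).choose e := by
  simp only [hp, ← powersetCard_eq_filter, card_powersetCard]

variable [DecidableEq α]

theorem card_filter_powerset_insert {s : Finset α} {a : α} (ha : a ∉ s)
    (p : Finset α → Prop) [DecidablePred p] :
    #{X ∈ (insert a s).powerset | p X} =
      #{X ∈ s.powerset | p X} + #{X ∈ s.powerset | p (insert a X)} := by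
  simp only [card_filter]
  exact sum_powerset_insert ha _

theorem card_filter_and_mem_eq_add [Fintype α] {i j : α} (hij : i ≠ j)
    (p : Finset α → Prop) [DecidablePred p] :
    #{S | p S ∧ i ∈ S} =
      #{Y ∈ (univ \ {i, j}).powerset | p (insert i Y)} +
        #{Y ∈ (univ \ {i, j}).powerset | p (insert i (insert j Y))} := by
  set P := (univ : Finset α) \ {i, j} with hP
  have hjP : j ∉ P := by simp [hP]
  have hiP : i ∉ insert j P := by simp [hP, hij]
  have huniv : (univ : Finset α) = insert i (insert j P) := by
    ext x; by_cases x = i <;> by_cases x = j <;> simp_all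
  have hno_i (Y : Finset α) (hY : Y ∈ P.powerset) : i ∉ insert j Y :=
    fun h => hiP (insert_subset_insert j (mem_powerset.mp hY) h)
  rw [← powerset_univ, huniv, card_filter_powerset_insert hiP,
    card_filter_powerset_insert hjP, card_filter_powerset_insert hjP,
    filter_false_of_mem fun Y hY h => hno_i Y hY (mem_insert_of_mem h.2),
    filter_false_of_mem fun Y hY h => hno_i Y hY h.2]
  simp

theorem sum_powerset_union_of_disjoint {β : Type*} [AddCommMonoid β] {s u : Finset α}
    (h : Disjoint s u) (f : Finset α → β) :
    ∑ Y ∈ (s ∪ u).powerset, f Y = ∑ X ∈ s.powerset, ∑ Z ∈ u.powerset, f (X ∪ Z) := by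
  induction s using Finset.induction_on generalizing f with
  | empty => simp
  | insert a s ha ih =>
    have hs : Disjoint s u := h.mono_left (subset_insert a s)
    have hau : a ∉ s ∪ u := by
      simp [ha, disjoint_left.mp h (mem_insert_self a s)]
    simp only [insert_union, sum_powerset_insert hau, sum_powerset_insert ha, ih hs]

theorem card_filter_powerset_union_sum {s u : Finset α} (h : Disjoint s u) {w : α → ℕ}
    {c d : ℕ} (hs : ∀ i ∈ s, w i = c) (hu : ∀ i ∈ u, w i = d) (p : ℕ → Prop) [DecidablePred p] :
    #{Y ∈ (s ∪ u).powerset | p (∑ i ∈ Y, w i)} =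
      ∑ a ∈ range (#s + 1), (#s).choose a * #{Z ∈ u.powerset | p (a * c + #Z * d)} := by
  have hsum (X Z : Finset α) (hX : X ⊆ s) (hZ : Z ⊆ u) :
      ∑ i ∈ X ∪ Z, w i = #X * c + #Z * d := by
    rw [sum_union (h.mono hX hZ), sum_const_nat fun i hi => hs i (hX hi),
      sum_const_nat fun i hi => hu i (hZ hi)]
  have hcard := sum_powerset_apply_card (fun a => #{Z ∈ u.powerset | p (a * c + #Z * d)}) (x := s)
  simp only [smul_eq_mul] at hcard
  rw [card_filter, sum_powerset_union_of_disjoint h, ← hcard]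
  refine sum_congr rfl fun X hX => ?_
  rw [card_filter]
  refine sum_congr rfl fun Z hZ => ?_
  rw [hsum X Z (mem_powerset.mp hX) (mem_powerset.mp hZ)]

end Counting

theorem ceil_sub_div_toNat_eq_iff {a b c e : ℕ} (hc : 0 < c) (hba : b ≤ a) :
    ⌈((a : ℚ) - b) / c⌉.toNat = e ↔ a ≤ b + e * c ∧ b + e * c < a + c := by
  have hc' : (0 : ℚ) < c := by exact_mod_cast hc
  have hx : (0 : ℚ) ≤ ((a : ℚ) - b) / c := div_nonneg (by simpa using hba) hc'.le
  obtain ⟨z, hz⟩ := Int.eq_ofNat_of_zero_le (Int.ceil_nonneg hx)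
  rw [hz, Int.toNat_natCast, ← Nat.cast_inj (R := ℤ), ← hz, Int.ceil_eq_iff]
  push_cast
  rw [lt_div_iff₀ hc', div_le_iff₀ hc']
  qify
  constructor <;> rintro ⟨h₁, h₂⟩ <;> constructor <;> linarith

theorem eq_and_eq_zero_of_mul_add_mul_eq {k a e : ℕ} (ha : a ≤ k)
    (h : a * (2 * k + 3) + e * (k + 1) = k * (2 * k + 3)) : a = k ∧ e = 0 := by
  have hcop : Nat.Coprime (k + 1) (2 * k + 3) := by
    rw [show 2 * k + 3 = 1 + (k + 1) * 2 by ring, Nat.coprime_add_mul_left_right]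
    exact Nat.coprime_one_right _
  have hle : a * (2 * k + 3) ≤ k * (2 * k + 3) := Nat.mul_le_mul_right _ ha
  have hdvd : k + 1 ∣ (k - a) * (2 * k + 3) := ⟨e, by rw [Nat.sub_mul, mul_comm (k + 1)]; omega⟩
  have hka : k - a = 0 := Nat.eq_zero_of_dvd_of_lt (hcop.dvd_of_dvd_mul_right hdvd) (by omega)
  obtain rfl : a = k := by omega
  exact ⟨rfl, by simpa using h⟩

section WeightedGame

variable {q : ℕ} {w : Fin n → ℕ} {S : Finset (Fin n)} {i j : Fin n}

theorem sum_sdiff_union_add (hi : i ∈ S) (hj : j ∉ S) :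
    ∑ x ∈ S \ {i} ∪ {j}, w x + w i = ∑ x ∈ S, w x + w j := by
  rw [sum_union (disjoint_singleton_right.mpr fun h => hj (mem_sdiff.mp h).1), sum_singleton,
    add_right_comm, ← sum_singleton w i, sum_sdiff (singleton_subset_iff.mpr hi)]

theorem union_sdiff_eq_sdiff_union (hij : i ≠ j) : (S ∪ {i}) \ {j} = S \ {j} ∪ {i} := by
  ext x; by_cases x = i <;> by_cases x = j <;> simp_all

theorem dominates_of_le (h : w j ≤ w i) : Dominates q w i j := by
  intro S hj hi hwin
  have := sum_sdiff_union_add (w := w) hj hi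
  unfold Win at *
  rw [union_sdiff_eq_sdiff_union (ne_of_mem_of_not_mem hj hi).symm]
  omega

theorem lt_of_not_dominates (h : ¬ Dominates q w j i) : w j < w i :=
  lt_of_not_ge fun hle => h (dominates_of_le hle)

theorem not_dominates_of_sum (hj : j ∈ S) (hi : i ∉ S) (hwin : q ≤ ∑ x ∈ S, w x)
    (h : ∑ x ∈ S, w x + w i < q + w j) : ¬ Dominates q w i j := by
  intro hdom
  have hwin' := hdom S hj hi hwin
  have := sum_sdiff_union_add (w := w) hj hi
  unfold Win at hwin'
  rw [union_sdiff_eq_sdiff_union (ne_of_mem_of_not_mem hj hi).symm] at hwin'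
  omega

theorem IsSMWC.sum_lt_add (hS : IsSMWC q w S) (hi : i ∈ S) : ∑ x ∈ S, w x < q + w i := by
  have hlose := hS.1.2 _ (erase_ssubset hi)
  unfold Win at hlose
  have := sum_erase_add S w hi
  omega

theorem IsSMWC.sum_add_lt_add (hS : IsSMWC q w S) (hi : i ∈ S) (hj : j ∉ S)
    (hij : Dominates q w i j) (hji : ¬ Dominates q w j i) :
    ∑ x ∈ S, w x + w j < q + w i := by
  have hlose := hS.2 i hi j hj hij hji
  have := sum_sdiff_union_add (w := w) hi hj
  unfold Win at hlose
  omega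

theorem isSMWC_of_sum (hwin : q ≤ ∑ x ∈ S, w x) (hmin : ∀ i ∈ S, ∑ x ∈ S, w x < q + w i)
    (hshift : ∀ i ∈ S, ∀ j ∉ S, w j < w i → ∑ x ∈ S, w x + w j < q + w i) :
    IsSMWC q w S := by
  refine ⟨⟨hwin, fun T hT hwinT => ?_⟩, fun i hi j hj _ hji hwin' => ?_⟩
  · obtain ⟨i, hiS, hiT⟩ := exists_of_ssubset hT
    have := sum_le_sum_of_subset (f := w) (subset_erase.mpr ⟨hT.subset, hiT⟩)
    have := sum_erase_add S w hiS
    have := hmin i hiS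
    unfold Win at hwinT
    omega
  · have := hshift i hi j hj (lt_of_not_dominates hji)
    have := sum_sdiff_union_add (w := w) hi hj
    unfold Win at hwin'
    omega

theorem isSMWC_of_sum_eq (hpos : ∀ i ∈ S, 0 < w i) (h : ∑ x ∈ S, w x = q) : IsSMWC q w S :=
  isSMWC_of_sum h.ge (fun i hi => by have := hpos i hi; omega) fun i _ j _ hji => by omega

theorem bz_eq_card_add_card (hij : i ≠ j) :
    Bz q w i =
      #{Y ∈ (univ \ {i, j}).powerset | ∑ x ∈ Y, w x < q ∧ q ≤ ∑ x ∈ Y, w x + w i} +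
        #{Y ∈ (univ \ {i, j}).powerset |
          ∑ x ∈ Y, w x + w j < q ∧ q ≤ ∑ x ∈ Y, w x + w j + w i} := by
  unfold Bz
  simp only [and_comm (a := i ∈ _)]
  rw [card_filter_and_mem_eq_add hij]
  have hiY {Y : Finset (Fin n)} (hY : Y ∈ (univ \ {i, j}).powerset) : i ∉ Y :=
    fun h => by simpa using mem_powerset.mp hY h
  have hjY {Y : Finset (Fin n)} (hY : Y ∈ (univ \ {i, j}).powerset) : j ∉ Y :=
    fun h => by simpa using mem_powerset.mp hY h
  congr 2 <;> refine filter_congr fun Y hY => ?_ <;> unfold Win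
  · rw [erase_insert (hiY hY), sum_insert (hiY hY)]
    omega
  · have hijY : i ∉ insert j Y := by simp [hij, hiY hY]
    rw [erase_insert hijY, sum_insert hijY, sum_insert (hjY hY)]
    omega

theorem shiftIdx_eq_card_add_card (hij : i ≠ j) :
    ShiftIdx q w i =
      #{Y ∈ (univ \ {i, j}).powerset | IsSMWC q w (insert i Y)} +
        #{Y ∈ (univ \ {i, j}).powerset | IsSMWC q w (insert i (insert j Y))} :=
  card_filter_and_mem_eq_add hij _

end WeightedGame

theorem Fin.card_filter_le_val {m : ℕ} : #{i : Fin n | m ≤ (i : ℕ)} = n - m := by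
  have := card_filter_add_card_filter_not (s := (univ : Finset (Fin n))) (fun i => (i : ℕ) < m)
  simp only [Fin.card_filter_val_lt, card_univ, Fintype.card_fin, not_lt] at this
  omega

def heavy (k n : ℕ) : Finset (Fin n) := {i | 2 ≤ (i : ℕ) ∧ (i : ℕ) < k + 2}

def light (k n : ℕ) : Finset (Fin n) := {i | k + 2 ≤ (i : ℕ)}

section Players

variable {k : ℕ} {i i₀ i₁ : Fin n} {Y : Finset (Fin n)}

theorem mem_heavy : i ∈ heavy k n ↔ 2 ≤ (i : ℕ) ∧ (i : ℕ) < k + 2 := by simp [heavy]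

theorem mem_light : i ∈ light k n ↔ k + 2 ≤ (i : ℕ) := by simp [light]

theorem disjoint_heavy_light : Disjoint (heavy k n) (light k n) :=
  disjoint_left.mpr fun i hh hl => by rw [mem_heavy] at hh; rw [mem_light] at hl; omega

theorem heavy_union_light : heavy k n ∪ light k n = ({i | 2 ≤ (i : ℕ)} : Finset (Fin n)) := by
  ext i; simp only [mem_union, mem_heavy, mem_light, mem_filter, mem_univ, true_and]; omega

theorem mem_heavy_union_light : i ∈ heavy k n ∪ light k n ↔ 2 ≤ (i : ℕ) := by
  rw [heavy_union_light, mem_filter]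
  exact and_iff_right (mem_univ i)

theorem notMem_of_subset_heavy_union_light (hY : Y ⊆ heavy k n ∪ light k n) (hi : (i : ℕ) < 2) :
    i ∉ Y :=
  fun h => by have := mem_heavy_union_light.mp (hY h); omega

theorem card_heavy_union_light : #(heavy k n ∪ light k n) = n - 2 := by
  rw [heavy_union_light, Fin.card_filter_le_val]

theorem card_light : #(light k n) = n - (k + 2) := Fin.card_filter_le_val

theorem card_heavy (h : k + 2 ≤ n) : #(heavy k n) = k := by
  have := card_union_of_disjoint (disjoint_heavy_light (k := k) (n := n))
  rw [card_heavy_union_light, card_light] at this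
  omega

theorem compl_pair_eq (h₀ : (i₀ : ℕ) = 0) (h₁ : (i₁ : ℕ) = 1) :
    univ \ {i₀, i₁} = heavy k n ∪ light k n := by
  rw [heavy_union_light]
  ext i
  simp only [mem_sdiff, mem_univ, mem_insert, mem_singleton, true_and, mem_filter, ← Fin.val_inj]
  omega

end Players

structure IsParametricGame (k m n t q : ℕ) (w : Fin n → ℕ) : Prop where
  card_eq : n = 3 * k + 3 + m
  t_eq : t = 2 * k ^ 2 + 3 * k + 1
  quota_eq : q = 2 * t + m * (k + 1)
  weight_eq : ∀ i : Fin n, w i =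
    if (i : ℕ) = 0 then t + 1 + m * (k + 1)
    else if (i : ℕ) = 1 then t + m * (k + 1)
    else if (i : ℕ) < k + 2 then 2 * k + 3
    else k + 1

namespace IsParametricGame

variable {k m t q : ℕ} {w : Fin n → ℕ} {i i₀ i₁ : Fin n} {Y : Finset (Fin n)}
variable (hg : IsParametricGame k m n t q w)
include hg

theorem t_eq_heavy : t = k * (2 * k + 3) + 1 := by rw [hg.t_eq]; ring

theorem t_eq_light : t = (2 * k + 1) * (k + 1) := by rw [hg.t_eq]; ring

theorem weight_of_val_eq_zero (h : (i : ℕ) = 0) : w i = t + 1 + m * (k + 1) := by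
  simp [hg.weight_eq, h]

theorem weight_of_val_eq_one (h : (i : ℕ) = 1) : w i = t + m * (k + 1) := by
  simp [hg.weight_eq, h]

theorem weight_of_mem_heavy (h : i ∈ heavy k n) : w i = 2 * k + 3 := by
  rw [mem_heavy] at h
  rw [hg.weight_eq, if_neg (by omega), if_neg (by omega), if_pos h.2]

theorem weight_of_mem_light (h : i ∈ light k n) : w i = k + 1 := by
  rw [mem_light] at h
  rw [hg.weight_eq, if_neg (by omega), if_neg (by omega), if_neg (by omega)]

theorem weight_cases :
    w i = t + 1 + m * (k + 1) ∨ w i = t + m * (k + 1) ∨ w i = 2 * k + 3 ∨ w i = k + 1 := by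
  rw [hg.weight_eq]; split_ifs <;> simp

theorem le_weight : k + 1 ≤ w i := by
  have := hg.t_eq_light
  rcases hg.weight_cases (i := i) with h | h | h | h <;> rw [h] <;> nlinarith

theorem weight_le_of_mem (h : i ∈ heavy k n ∪ light k n) : w i ≤ 2 * k + 3 := by
  rcases mem_union.mp h with h | h
  · rw [hg.weight_of_mem_heavy h]
  · rw [hg.weight_of_mem_light h]; omega

theorem card_heavy : #(heavy k n) = k := Stmt18.card_heavy (by rw [hg.card_eq]; omega)

theorem card_light : #(light k n) = 2 * k + 1 + m := by
  rw [Stmt18.card_light, hg.card_eq]; omega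

theorem sum_heavy : ∑ i ∈ heavy k n, w i + 1 = t := by
  rw [sum_const_nat fun i => hg.weight_of_mem_heavy, hg.card_heavy, hg.t_eq_heavy]

theorem sum_light : ∑ i ∈ light k n, w i = t + m * (k + 1) := by
  rw [sum_const_nat fun i => hg.weight_of_mem_light, hg.card_light, hg.t_eq_light]; ring

theorem sum_eq_of_subset (hY : Y ⊆ heavy k n ∪ light k n) :
    ∑ i ∈ Y, w i = #(Y ∩ heavy k n) * (2 * k + 3) + #(Y ∩ light k n) * (k + 1) := by
  conv_lhs => rw [← inter_eq_left.mpr hY, inter_union_distrib_left]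
  rw [sum_union (disjoint_heavy_light.mono inter_subset_right inter_subset_right),
    sum_const_nat fun i hi => hg.weight_of_mem_heavy (mem_inter.mp hi).2,
    sum_const_nat fun i hi => hg.weight_of_mem_light (mem_inter.mp hi).2]

theorem sum_lt_quota (hY : Y ⊆ heavy k n ∪ light k n) : ∑ i ∈ Y, w i < q := by
  have := sum_le_sum_of_subset (f := w) hY
  rw [sum_union disjoint_heavy_light, hg.sum_light] at this
  have := hg.sum_heavy
  rw [hg.quota_eq]
  omega

theorem eq_heavy_of_sum_add_one_eq (hY : Y ⊆ heavy k n ∪ light k n)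
    (h : ∑ i ∈ Y, w i + 1 = t) : Y = heavy k n := by
  have hcard := card_le_card (inter_subset_right (s₁ := Y) (s₂ := heavy k n))
  rw [hg.card_heavy] at hcard
  obtain ⟨hheavy, hlight⟩ := eq_and_eq_zero_of_mul_add_mul_eq hcard
    (by rw [← hg.sum_eq_of_subset hY]; have := hg.t_eq_heavy; omega)
  have hsplit : Y = Y ∩ heavy k n ∪ Y ∩ light k n := by
    rw [← inter_union_distrib_left, inter_eq_left.mpr hY]
  rw [hsplit, eq_of_subset_of_card_le inter_subset_right (by rw [hg.card_heavy, hheavy]),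
    card_eq_zero.mp hlight, union_empty]

theorem card_filter_sum_eq_t_sub_one :
    #{Y ∈ (heavy k n ∪ light k n).powerset | ∑ i ∈ Y, w i = t - 1} = 1 := by
  have := hg.sum_heavy
  rw [card_eq_one]
  refine ⟨heavy k n, ?_⟩
  ext Y
  simp only [mem_filter, mem_powerset, mem_singleton]
  constructor
  · rintro ⟨hY, h⟩
    exact hg.eq_heavy_of_sum_add_one_eq hY (by omega)
  · rintro rfl
    exact ⟨subset_union_left, by omega⟩

theorem bz_zero (h₀ : (i₀ : ℕ) = 0) (h₁ : (i₁ : ℕ) = 1) : Bz q w i₀ = 2 ^ (n - 2) + 1 := by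
  have := hg.weight_of_val_eq_zero h₀
  have := hg.weight_of_val_eq_one h₁
  have := hg.sum_heavy
  have := hg.quota_eq
  have hwithout : {Y ∈ (heavy k n ∪ light k n).powerset |
      ∑ x ∈ Y, w x < q ∧ q ≤ ∑ x ∈ Y, w x + w i₀} =
      {Y ∈ (heavy k n ∪ light k n).powerset | t - 1 ≤ ∑ x ∈ Y, w x} :=
    filter_congr fun Y hY => by have := hg.sum_lt_quota (mem_powerset.mp hY); omega
  have hwith : {Y ∈ (heavy k n ∪ light k n).powerset |
      ∑ x ∈ Y, w x + w i₁ < q ∧ q ≤ ∑ x ∈ Y, w x + w i₁ + w i₀} =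
      {Y ∈ (heavy k n ∪ light k n).powerset | ∑ x ∈ Y, w x ≤ t - 1} :=
    filter_congr fun Y _ => by omega
  rw [bz_eq_card_add_card (Fin.ne_of_val_ne (by omega) : i₀ ≠ i₁), compl_pair_eq h₀ h₁,
    hwithout, hwith, add_comm, card_filter_le_add_card_filter_ge, card_powerset,
    card_heavy_union_light, hg.card_filter_sum_eq_t_sub_one]

theorem bz_one (h₀ : (i₀ : ℕ) = 0) (h₁ : (i₁ : ℕ) = 1) : Bz q w i₁ = 2 ^ (n - 2) - 1 := by
  have := hg.weight_of_val_eq_zero h₀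
  have := hg.weight_of_val_eq_one h₁
  have := hg.sum_heavy
  have := hg.quota_eq
  have hwithout : {Y ∈ (heavy k n ∪ light k n).powerset |
      ∑ x ∈ Y, w x < q ∧ q ≤ ∑ x ∈ Y, w x + w i₁} =
      {Y ∈ (heavy k n ∪ light k n).powerset | t - 1 < ∑ x ∈ Y, w x} :=
    filter_congr fun Y hY => by have := hg.sum_lt_quota (mem_powerset.mp hY); omega
  have hwith : {Y ∈ (heavy k n ∪ light k n).powerset |
      ∑ x ∈ Y, w x + w i₀ < q ∧ q ≤ ∑ x ∈ Y, w x + w i₀ + w i₁} =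
      {Y ∈ (heavy k n ∪ light k n).powerset | ∑ x ∈ Y, w x < t - 1} :=
    filter_congr fun Y _ => by omega
  have hcount := card_filter_lt_add_card_filter_gt_add_card_filter_eq
    (heavy k n ∪ light k n).powerset (fun Y => ∑ i ∈ Y, w i) (t - 1)
  rw [card_powerset, card_heavy_union_light, hg.card_filter_sum_eq_t_sub_one] at hcount
  rw [bz_eq_card_add_card (Fin.ne_of_val_ne (by omega) : i₁ ≠ i₀), pair_comm,
    compl_pair_eq h₀ h₁, hwithout, hwith]
  omega

theorem not_dominates_one_zero (h₀ : (i₀ : ℕ) = 0) (h₁ : (i₁ : ℕ) = 1) :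
    ¬ Dominates q w i₁ i₀ := by
  have hi₀ : i₀ ∉ heavy k n := by rw [mem_heavy]; omega
  have hi₁ : i₁ ∉ insert i₀ (heavy k n) := by
    rw [mem_insert, mem_heavy, ← Fin.val_inj]; omega
  have hsum : ∑ i ∈ insert i₀ (heavy k n), w i = q := by
    rw [sum_insert hi₀, hg.weight_of_val_eq_zero h₀, hg.quota_eq, ← hg.sum_heavy]; ring
  refine not_dominates_of_sum (mem_insert_self _ _) hi₁ hsum.ge ?_
  rw [hsum, hg.weight_of_val_eq_zero h₀, hg.weight_of_val_eq_one h₁]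
  omega

theorem not_dominates_heavy_one (h₁ : (i₁ : ℕ) = 1) (hb : i ∈ heavy k n) :
    ¬ Dominates q w i i₁ := by
  have hk : 1 ≤ k := by rw [mem_heavy] at hb; omega
  have hi₁ : i₁ ∉ light k n := by rw [mem_light]; omega
  have hi : i ∉ insert i₁ (light k n) := by
    rw [mem_insert, mem_light, ← Fin.val_inj]; rw [mem_heavy] at hb; omega
  have hsum : ∑ i ∈ insert i₁ (light k n), w i = 2 * (t + m * (k + 1)) := by
    rw [sum_insert hi₁, hg.weight_of_val_eq_one h₁, hg.sum_light]; ring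
  have ht : 2 * k + 3 < t := by have := hg.t_eq_heavy; nlinarith
  refine not_dominates_of_sum (mem_insert_self _ _) hi (by rw [hsum, hg.quota_eq]; omega) ?_
  rw [hsum, hg.weight_of_mem_heavy hb, hg.weight_of_val_eq_one h₁, hg.quota_eq]
  omega

theorem isSMWC_insert_zero_iff (h₀ : (i₀ : ℕ) = 0) (h₁ : (i₁ : ℕ) = 1)
    (hY : Y ⊆ heavy k n ∪ light k n) : IsSMWC q w (insert i₀ Y) ↔ Y = heavy k n := by
  have hi₀ : i₀ ∉ Y := notMem_of_subset_heavy_union_light hY (by omega)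
  have hsum : ∑ i ∈ insert i₀ Y, w i = t + 1 + m * (k + 1) + ∑ i ∈ Y, w i := by
    rw [sum_insert hi₀, hg.weight_of_val_eq_zero h₀]
  have := hg.quota_eq
  constructor
  · intro hS
    have hi₁ : i₁ ∉ insert i₀ Y := by
      rw [mem_insert, not_or, ← Fin.val_inj]
      exact ⟨by omega, notMem_of_subset_heavy_union_light hY (by omega)⟩
    have hlt := hS.sum_add_lt_add (mem_insert_self _ _) hi₁
      (dominates_of_le (by rw [hg.weight_of_val_eq_zero h₀, hg.weight_of_val_eq_one h₁]; omega))
      (hg.not_dominates_one_zero h₀ h₁)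
    have hwin := hS.1.1
    unfold Win at hwin
    rw [hsum, hg.weight_of_val_eq_zero h₀, hg.weight_of_val_eq_one h₁] at hlt
    exact hg.eq_heavy_of_sum_add_one_eq hY (by omega)
  · rintro rfl
    refine isSMWC_of_sum_eq (fun i _ => by have := hg.le_weight (i := i); omega) ?_
    have := hg.sum_heavy
    omega

theorem sum_window_of_isSMWC_insert_one (h₁ : (i₁ : ℕ) = 1) (hY : Y ⊆ heavy k n ∪ light k n)
    (hS : IsSMWC q w (insert i₁ Y)) : t ≤ ∑ i ∈ Y, w i ∧ ∑ i ∈ Y, w i < t + (k + 1) := by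
  have hsum : ∑ i ∈ insert i₁ Y, w i = t + m * (k + 1) + ∑ i ∈ Y, w i := by
    rw [sum_insert (notMem_of_subset_heavy_union_light hY (by omega)), hg.weight_of_val_eq_one h₁]
  have := hg.quota_eq
  have hwin := hS.1.1
  unfold Win at hwin
  rw [hsum] at hwin
  refine ⟨by omega, ?_⟩
  -- `Y` outweighs all heavy players together, so it contains a light player
  obtain ⟨y, hyY, hy⟩ : ∃ y ∈ Y, y ∈ light k n := by
    by_contra! hnone
    have hsub : Y ⊆ heavy k n := fun y hy => (mem_union.mp (hY hy)).resolve_right (hnone y hy)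
    have := sum_le_sum_of_subset (f := w) hsub
    have := hg.sum_heavy
    omega
  have hlt := hS.sum_lt_add (mem_insert_of_mem hyY)
  rw [hsum, hg.weight_of_mem_light hy] at hlt
  omega

theorem isSMWC_insert_one_of_sum_window (h₁ : (i₁ : ℕ) = 1) (hY : Y ⊆ heavy k n ∪ light k n)
    (hlow : t ≤ ∑ i ∈ Y, w i) (hhigh : ∑ i ∈ Y, w i < t + (k + 1)) :
    IsSMWC q w (insert i₁ Y) := by
  have hi₁ : i₁ ∉ Y := notMem_of_subset_heavy_union_light hY (by omega)
  have hsum : ∑ i ∈ insert i₁ Y, w i = t + m * (k + 1) + ∑ i ∈ Y, w i := by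
    rw [sum_insert hi₁, hg.weight_of_val_eq_one h₁]
  have := hg.quota_eq
  refine isSMWC_of_sum (by rw [hsum]; omega)
    (fun i _ => by have := hg.le_weight (i := i); omega) fun i hi j hj hji => ?_
  rw [hsum]
  rcases mem_insert.mp hi with rfl | hiY
  · -- replacing `i₁` leaves a coalition of heavy and light players only
    have hj₀ : (j : ℕ) ≠ 0 := fun h => by
      rw [hg.weight_of_val_eq_zero h, hg.weight_of_val_eq_one h₁] at hji; omega
    have hj₁ : (j : ℕ) ≠ 1 := fun h => hj (Fin.ext (h.trans h₁.symm) ▸ mem_insert_self _ _)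
    have hjP : j ∈ heavy k n ∪ light k n := mem_heavy_union_light.mpr (by omega)
    have := hg.sum_lt_quota (insert_subset hjP hY)
    rw [sum_insert fun h => hj (mem_insert_of_mem h)] at this
    rw [hg.weight_of_val_eq_one h₁]
    omega
  · -- only a heavy `i` can be replaced by a lighter player, necessarily a light one
    have := hg.le_weight (i := j)
    rcases mem_union.mp (hY hiY) with hih | hil
    · have hk : 1 ≤ k := by rw [mem_heavy] at hih; omega
      have ht : 2 * k + 3 < t := by have := hg.t_eq_heavy; nlinarith
      rw [hg.weight_of_mem_heavy hih] at hji ⊢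
      rcases hg.weight_cases (i := j) with h | h | h | h <;> omega
    · rw [hg.weight_of_mem_light hil] at hji
      omega

theorem isSMWC_insert_one_iff (h₁ : (i₁ : ℕ) = 1) (hY : Y ⊆ heavy k n ∪ light k n) :
    IsSMWC q w (insert i₁ Y) ↔ t ≤ ∑ i ∈ Y, w i ∧ ∑ i ∈ Y, w i < t + (k + 1) :=
  ⟨hg.sum_window_of_isSMWC_insert_one h₁ hY,
    fun h => hg.isSMWC_insert_one_of_sum_window h₁ hY h.1 h.2⟩

theorem isSMWC_pair (h₀ : (i₀ : ℕ) = 0) (h₁ : (i₁ : ℕ) = 1) (hk : 2 ≤ k) :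
    IsSMWC q w {i₀, i₁} := by
  have := hg.weight_of_val_eq_zero h₀
  have := hg.weight_of_val_eq_one h₁
  have := hg.quota_eq
  have ht : 2 * k + 4 < t := by have := hg.t_eq_heavy; nlinarith
  have hsum : ∑ i ∈ {i₀, i₁}, w i = w i₀ + w i₁ := sum_pair (Fin.ne_of_val_ne (by omega))
  have hlarge {i : Fin n} (hi : i ∈ ({i₀, i₁} : Finset (Fin n))) : t + m * (k + 1) ≤ w i := by
    rcases mem_insert.mp hi with rfl | hi
    · omega
    · rw [mem_singleton.mp hi]; omega
  refine isSMWC_of_sum (by omega) (fun i hi => by have := hlarge hi; omega)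
    fun i hi j hj _ => ?_
  have hjP : j ∈ heavy k n ∪ light k n := by
    rw [mem_heavy_union_light]
    simp only [mem_insert, mem_singleton, not_or, ← Fin.val_inj, h₀, h₁] at hj
    omega
  have := hg.weight_le_of_mem hjP
  have := hlarge hi
  omega

theorem two_le_of_isSMWC_pair (h₀ : (i₀ : ℕ) = 0) (h₁ : (i₁ : ℕ) = 1)
    (hS : IsSMWC q w {i₀, i₁}) : 2 ≤ k := by
  have := hg.weight_of_val_eq_zero h₀
  have := hg.weight_of_val_eq_one h₁
  have := hg.quota_eq
  have ht := hg.t_eq_heavy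
  have hsum : ∑ i ∈ {i₀, i₁}, w i = w i₀ + w i₁ := sum_pair (Fin.ne_of_val_ne (by omega))
  have hk : 1 ≤ k := by
    have := hS.sum_lt_add (mem_insert_of_mem (mem_singleton_self _))
    by_contra hk
    rw [show k = 0 by omega] at ht
    omega
  -- for `k = 1` the heavy player `2` could replace `i₁`
  have h2 : 2 < n := by rw [hg.card_eq]; omega
  have hb : (⟨2, h2⟩ : Fin n) ∈ heavy k n := by rw [mem_heavy, Fin.val_mk]; omega
  have hbS : (⟨2, h2⟩ : Fin n) ∉ ({i₀, i₁} : Finset (Fin n)) := by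
    simp [← Fin.val_inj, h₀, h₁]
  have := hS.sum_add_lt_add (mem_insert_of_mem (mem_singleton_self _)) hbS
    (dominates_of_le (by rw [hg.weight_of_mem_heavy hb]; nlinarith))
    (hg.not_dominates_heavy_one h₁ hb)
  rw [hsum, hg.weight_of_mem_heavy hb] at this
  by_contra hk2
  rw [show k = 1 by omega] at ht
  omega

theorem isSMWC_insert_insert_iff (h₀ : (i₀ : ℕ) = 0) (h₁ : (i₁ : ℕ) = 1)
    (hY : Y ⊆ heavy k n ∪ light k n) :
    IsSMWC q w (insert i₀ (insert i₁ Y)) ↔ Y = ∅ ∧ 2 ≤ k := by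
  constructor
  · intro hS
    obtain rfl : Y = ∅ := eq_empty_of_forall_notMem fun y hy => by
      have hi₁ : i₁ ∉ Y := notMem_of_subset_heavy_union_light hY (by omega)
      have hi₀ : i₀ ∉ insert i₁ Y := by
        rw [mem_insert, not_or, ← Fin.val_inj]
        exact ⟨by omega, notMem_of_subset_heavy_union_light hY (by omega)⟩
      have := hS.sum_lt_add (mem_insert_of_mem (mem_insert_of_mem hy))
      rw [sum_insert hi₀, sum_insert hi₁, hg.weight_of_val_eq_zero h₀,
        hg.weight_of_val_eq_one h₁, hg.quota_eq] at this
      have := single_le_sum (f := w) (fun _ _ => Nat.zero_le _) hy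
      omega
    rw [insert_empty] at hS
    exact ⟨rfl, hg.two_le_of_isSMWC_pair h₀ h₁ hS⟩
  · rintro ⟨rfl, hk⟩
    rw [insert_empty]
    exact hg.isSMWC_pair h₀ h₁ hk

theorem card_filter_isSMWC_insert_insert (h₀ : (i₀ : ℕ) = 0) (h₁ : (i₁ : ℕ) = 1) :
    #{Y ∈ (heavy k n ∪ light k n).powerset | IsSMWC q w (insert i₀ (insert i₁ Y))} =
      if 2 ≤ k then 1 else 0 := by
  rw [filter_congr fun Y hY => hg.isSMWC_insert_insert_iff h₀ h₁ (mem_powerset.mp hY)]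
  split_ifs with hk
  · simp only [hk, and_true, filter_eq', empty_mem_powerset, if_true, card_singleton]
  · simp only [hk, and_false, filter_false, card_empty]

theorem shiftIdx_zero (h₀ : (i₀ : ℕ) = 0) (h₁ : (i₁ : ℕ) = 1) :
    ShiftIdx q w i₀ = 1 + if 2 ≤ k then 1 else 0 := by
  rw [shiftIdx_eq_card_add_card (Fin.ne_of_val_ne (by omega) : i₀ ≠ i₁), compl_pair_eq h₀ h₁,
    hg.card_filter_isSMWC_insert_insert h₀ h₁,
    filter_congr fun Y hY => hg.isSMWC_insert_zero_iff h₀ h₁ (mem_powerset.mp hY), filter_eq',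
    if_pos (mem_powerset.mpr subset_union_left), card_singleton]

theorem card_filter_isSMWC_insert_one (h₁ : (i₁ : ℕ) = 1) :
    #{Y ∈ (heavy k n ∪ light k n).powerset | IsSMWC q w (insert i₁ Y)} =
      ∑ a ∈ range (k + 1), k.choose a * (2 * k + 1 + m).choose
        ⌈((t : ℚ) - (a : ℚ) * (2 * (k : ℚ) + 3)) / ((k : ℚ) + 1)⌉.toNat := by
  rw [filter_congr fun Y hY => hg.isSMWC_insert_one_iff h₁ (mem_powerset.mp hY),
    card_filter_powerset_union_sum disjoint_heavy_light (fun i => hg.weight_of_mem_heavy)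
      (fun i => hg.weight_of_mem_light) (fun x => t ≤ x ∧ x < t + (k + 1)), hg.card_heavy]
  refine sum_congr rfl fun a ha => ?_
  have hle : a * (2 * k + 3) ≤ t := by
    have := Nat.mul_le_mul_right (2 * k + 3) (Nat.lt_succ_iff.mp (mem_range.mp ha))
    have := hg.t_eq_heavy
    omega
  rw [card_filter_powerset_card_eq (light k n)
    (fun e => t ≤ a * (2 * k + 3) + e * (k + 1) ∧ a * (2 * k + 3) + e * (k + 1) < t + (k + 1))
    fun e => (ceil_sub_div_toNat_eq_iff (c := k + 1) k.succ_pos hle).symm.trans eq_comm,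
    hg.card_light]
  push_cast
  rfl

theorem shiftIdx_one (h₀ : (i₀ : ℕ) = 0) (h₁ : (i₁ : ℕ) = 1) :
    ShiftIdx q w i₁ =
      (∑ a ∈ range (k + 1), k.choose a * (2 * k + 1 + m).choose
        ⌈((t : ℚ) - (a : ℚ) * (2 * (k : ℚ) + 3)) / ((k : ℚ) + 1)⌉.toNat) +
      if 2 ≤ k then 1 else 0 := by
  rw [shiftIdx_eq_card_add_card (Fin.ne_of_val_ne (by omega) : i₁ ≠ i₀), pair_comm,
    compl_pair_eq h₀ h₁, hg.card_filter_isSMWC_insert_one h₁]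
  simp_rw [insert_comm i₁ i₀]
  rw [hg.card_filter_isSMWC_insert_insert h₀ h₁]

end IsParametricGame

/-- for the weighted game
`[2t+m(k+1); t+1+m(k+1), t+m(k+1), 2k+3 (k times), k+1 (2k+1+m times)]`
with `k ≥ 1`, `m ∈ {0,1,2}`, `n = 3k+3+m` and `t = 2k²+3k+1`, one has
`Bz^r_1 = 2^{n-2}+1`, `Bz^r_2 = 2^{n-2}-1`, `S^r_1 = 1` if `k = 1`,
`S^r_1 = 2` if `k > 1`, and
`S^r_2 = -1 + S^r_1 + Σ_{a=0}^{k} C(k,a)·C(2k+1+m, ⌈(t-a(2k+3))/(k+1)⌉)`. -/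
theorem banzhaf_shift_of_parametric_game (k m : ℕ)
    (n t q : ℕ) (hn : n = 3 * k + 3 + m) (ht : t = 2 * k ^ 2 + 3 * k + 1)
    (hq : q = 2 * t + m * (k + 1)) (w : Fin n → ℕ)
    (hw : ∀ i : Fin n, w i =
      if (i : ℕ) = 0 then t + 1 + m * (k + 1)
      else if (i : ℕ) = 1 then t + m * (k + 1)
      else if (i : ℕ) < k + 2 then 2 * k + 3
      else k + 1) :
    Bz q w ⟨0, by omega⟩ = 2 ^ (n - 2) + 1 ∧
    Bz q w ⟨1, by omega⟩ = 2 ^ (n - 2) - 1 ∧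
    (k = 1 → ShiftIdx q w ⟨0, by omega⟩ = 1) ∧
    (1 < k → ShiftIdx q w ⟨0, by omega⟩ = 2) ∧
    ShiftIdx q w ⟨1, by omega⟩ + 1 =
      ShiftIdx q w ⟨0, by omega⟩ +
        ∑ a ∈ Finset.range (k + 1),
          Nat.choose k a *
            Nat.choose (2 * k + 1 + m)
              (⌈((t : ℚ) - (a : ℚ) * (2 * (k : ℚ) + 3)) / ((k : ℚ) + 1)⌉.toNat) := by
  have hg : IsParametricGame k m n t q w := ⟨hn, ht, hq, hw⟩
  have h₀ : ((⟨0, by omega⟩ : Fin n) : ℕ) = 0 := rfl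
  have h₁ : ((⟨1, by omega⟩ : Fin n) : ℕ) = 1 := rfl
  refine ⟨hg.bz_zero h₀ h₁, hg.bz_one h₀ h₁, fun hk => ?_, fun hk => ?_, ?_⟩
  · rw [hg.shiftIdx_zero h₀ h₁, if_neg (by omega)]
  · rw [hg.shiftIdx_zero h₀ h₁, if_pos (by omega)]
  · rw [hg.shiftIdx_one h₀ h₁, hg.shiftIdx_zero h₀ h₁]
    ring

end Stmt18
end
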